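/- Let n be a natural number, G a group, and ρ : G →* (V ≃ₗ[ℂ] V) a linear action of G on V = (Fin n → ℂ). Let f₁, f₂, α, β, h₁ ∈ MvPolynomial (Fin n) ℂ with f₁ homogeneous of degree d₁ and nonzero, f₂ homogeneous of degree d₂ and nonzero, α homogeneous of degree d₁, β homogeneous of degree d₂, f₁ and f₂ relatively prime (IsRelPrime f₁ f₂, i.e. no common non-unit factor), and h₁ = α·f₂ + β·f₁. Suppose fᵢ(ρ(g)v) = χᵢ(g)·fᵢ(v) for all g, v, where χ₁, χ₂ : G →* ℂˣ, and suppose Φ : G → ℂ satisfies h₁(ρ(g)v) = χ₁(g)·χ₂(g)·(f₁(v)·f₂(v)·Φ(g) + h₁(v)) for all g ∈ G, v ∈ V. Then there exist additive functions Φ₁, Φ₂ : G → ℂ (Φᵢ(g₁g₂) = Φᵢ(g₁) + Φᵢ(g₂)) such that α(ρ(g)v) = χ₁(g)·(f₁(v)·Φ₁(g) + α(v)) and β(ρ(g)v) = χ₂(g)·(f₂(v)·Φ₂(g) + β(v)) for all g ∈ G, v ∈ V; moreover, if h₁ and f₁·f₂ are relatively prime (IsRelPrime h₁ (f₁·f₂)),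 then α is relatively prime to f₁ and β is relatively prime to f₂. -/

import Mathlib

/-!
Each `ρ g` acts on polynomials by the linear substitution `p ↦ p ∘ ρ g`, which preserves
homogeneity. Applying it to `h₁ = α f₂ + β f₁` and comparing with the transformation law of `h₁`
gives two partial fraction decompositions of one rational function over the denominators `f₁, f₂`.
Since `f₁` and `f₂` are coprime, the numerators over `f₁` agree modulo `f₁`, so
`α ∘ ρ g - χ₁(g) α` is a multiple of `f₁` of the same degree as `f₁`, i.e. a constant multiple.
The constants form an additive function because `ρ` and `χ₁` are multiplicative. A common factor
of `α` and `f₁` divides both `h₁` and `f₁ f₂`, which gives the statement about lowest terms.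
-/

open MvPolynomial

theorem IsRelPrime.dvd_sub_of_mul_add_mul_eq {R : Type*} [CommRing R] [DecompositionMonoid R]
    {f₁ f₂ a b a' b' : R} (h : IsRelPrime f₁ f₂)
    (heq : a * f₂ + b * f₁ = a' * f₂ + b' * f₁) : f₁ ∣ a - a' :=
  h.dvd_of_dvd_mul_right ⟨b' - b, by linear_combination heq⟩

namespace MvPolynomial

variable {σ R : Type*} [CommRing R]

section LinearSubst

variable [Fintype σ] [DecidableEq σ]

/-- The polynomial `p ∘ L`. -/
noncomputable def linearSubst (L : (σ → R) →ₗ[R] σ → R) :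
    MvPolynomial σ R →ₐ[R] MvPolynomial σ R :=
  bind₁ fun i => ∑ j, C (LinearMap.toMatrix' L i j) * X j

theorem eval_linearSubst (L : (σ → R) →ₗ[R] σ → R) (p : MvPolynomial σ R) (v : σ → R) :
    eval v (linearSubst L p) = eval (L v) p := by
  have hL : (fun i => eval v (∑ j, C (LinearMap.toMatrix' L i j) * X j)) = L v := by
    rw [← LinearMap.toMatrix'_mulVec]
    ext i
    simp [Matrix.mulVec, dotProduct]
  rw [← hL]
  exact eval₂Hom_bind₁ _ _ _ _

theorem IsHomogeneous.linearSubst {p : MvPolynomial σ R} {d : ℕ} (hp : p.IsHomogeneous d)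
    (L : (σ → R) →ₗ[R] σ → R) : (linearSubst L p).IsHomogeneous d := by
  simpa [MvPolynomial.linearSubst] using hp.aeval _ fun i =>
    IsHomogeneous.sum _ _ _ fun j _ => (isHomogeneous_X R j).C_mul _

theorem linearSubst_eq_iff [IsDomain R] [Infinite R] {L : (σ → R) →ₗ[R] σ → R}
    {p q : MvPolynomial σ R} : linearSubst L p = q ↔ ∀ v, eval (L v) p = eval v q := by
  simp only [funext_iff, eval_linearSubst]

end LinearSubst

theorem IsHomogeneous.exists_eq_C_mul_of_dvd [IsDomain R] {f p : MvPolynomial σ R} {d : ℕ}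
    (hf : f.IsHomogeneous d) (hf0 : f ≠ 0) (hp : p.IsHomogeneous d) (hdvd : f ∣ p) :
    ∃ c, p = C c * f := by
  obtain ⟨r, rfl⟩ := hdvd
  rcases eq_or_ne r 0 with rfl | hr
  · exact ⟨0, by simp⟩
  have hdeg : r.totalDegree = 0 := by
    have := totalDegree_mul_of_isDomain hf0 hr
    rw [hp.totalDegree (mul_ne_zero hf0 hr), hf.totalDegree hf0] at this
    omega
  exact ⟨r.coeff 0, by rw [mul_comm, ← totalDegree_eq_zero_iff_eq_C.mp hdeg]⟩

section PartialFraction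

variable [IsDomain R] [DecompositionMonoid (MvPolynomial σ R)]

theorem exists_eq_C_mul_add_of_partialFraction {f₁ f₂ α β α' β' : MvPolynomial σ R} {d : ℕ}
    (hrp : IsRelPrime f₁ f₂) (hf₁ : f₁.IsHomogeneous d) (hf₁0 : f₁ ≠ 0)
    (hα : α.IsHomogeneous d) (hα' : α'.IsHomogeneous d) {u₁ u₂ : Rˣ} {φ : R}
    (heq : α' * (C (u₂ : R) * f₂) + β' * (C (u₁ : R) * f₁) =
      C (u₁ : R) * C (u₂ : R) * (C φ * f₁ * f₂ + (α * f₂ + β * f₁))) :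
    ∃ c, α' = C (u₁ : R) * (C c * f₁ + α) := by
  have hrp' : IsRelPrime f₁ (C (u₂ : R) * f₂) :=
    (isRelPrime_mul_unit_left_right (u₂.isUnit.map C)).2 hrp
  have hdvd : f₁ ∣ α' - C (u₁ : R) * α :=
    hrp'.dvd_sub_of_mul_add_mul_eq (b := β' * C (u₁ : R))
      (b' := C (u₁ : R) * C (u₂ : R) * (C φ * f₂ + β)) (by linear_combination heq)
  obtain ⟨c, hc⟩ := hf₁.exists_eq_C_mul_of_dvd hf₁0 (hα'.sub (hα.C_mul _)) hdvd
  refine ⟨(u₁⁻¹ : Rˣ) * c, ?_⟩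
  rw [mul_add, ← mul_assoc, ← C_mul, Units.mul_inv_cancel_left]
  linear_combination hc

theorem exists_linearSubst_eq_of_partialFraction [Fintype σ] [DecidableEq σ]
    (L : (σ → R) →ₗ[R] σ → R) {f₁ f₂ α β h : MvPolynomial σ R} {d₁ d₂ : ℕ}
    (hrp : IsRelPrime f₁ f₂) (hf₁ : f₁.IsHomogeneous d₁) (hf₁0 : f₁ ≠ 0)
    (hf₂ : f₂.IsHomogeneous d₂) (hf₂0 : f₂ ≠ 0) (hα : α.IsHomogeneous d₁)
    (hβ : β.IsHomogeneous d₂) (hsum : h = α * f₂ + β * f₁) {u₁ u₂ : Rˣ} {φ : R}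
    (hL₁ : linearSubst L f₁ = C (u₁ : R) * f₁) (hL₂ : linearSubst L f₂ = C (u₂ : R) * f₂)
    (hLh : linearSubst L h = C (u₁ : R) * C (u₂ : R) * (C φ * f₁ * f₂ + h)) :
    ∃ c₁ c₂, linearSubst L α = C (u₁ : R) * (C c₁ * f₁ + α) ∧
      linearSubst L β = C (u₂ : R) * (C c₂ * f₂ + β) := by
  have heq : linearSubst L α * (C (u₂ : R) * f₂) + linearSubst L β * (C (u₁ : R) * f₁) =
      C (u₁ : R) * C (u₂ : R) * (C φ * f₁ * f₂ + (α * f₂ + β * f₁)) := by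
    rw [← hL₁, ← hL₂, ← map_mul, ← map_mul, ← map_add, ← hsum, hLh]
  have heq' : linearSubst L β * (C (u₁ : R) * f₁) + linearSubst L α * (C (u₂ : R) * f₂) =
      C (u₂ : R) * C (u₁ : R) * (C φ * f₂ * f₁ + (β * f₁ + α * f₂)) := by
    linear_combination heq
  obtain ⟨c₁, hc₁⟩ := exists_eq_C_mul_add_of_partialFraction hrp hf₁ hf₁0 hα (hα.linearSubst L) heq
  obtain ⟨c₂, hc₂⟩ :=
    exists_eq_C_mul_add_of_partialFraction hrp.symm hf₂ hf₂0 hβ (hβ.linearSubst L) heq'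
  exact ⟨c₁, c₂, hc₁, hc₂⟩

end PartialFraction

end MvPolynomial

theorem map_mul_eq_add_of_relInvariant {K V G : Type*} [CommRing K] [IsDomain K]
    [AddCommMonoid V] [Module K V] [Monoid G] (ρ : G →* (V ≃ₗ[K] V)) (χ : G →* Kˣ)
    {f a : V → K} {Φ : G → K} (hf : ∀ g v, f (ρ g v) = χ g * f v)
    (ha : ∀ g v, a (ρ g v) = χ g * (f v * Φ g + a v)) (hf0 : f ≠ 0) (g₁ g₂ : G) :
    Φ (g₁ * g₂) = Φ g₁ + Φ g₂ := by
  obtain ⟨v, hv⟩ := Function.ne_iff.1 hf0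
  have hcocycle : (χ (g₁ * g₂) : K) * (f v * Φ (g₁ * g₂) + a v) =
      χ (g₁ * g₂) * (f v * (Φ g₁ + Φ g₂) + a v) := by
    rw [← ha, map_mul, LinearEquiv.mul_apply, ha, ha, hf, map_mul, Units.val_mul]
    ring
  exact mul_left_cancel₀ hv (add_right_cancel (mul_left_cancel₀ (Units.ne_zero _) hcocycle))

/-- If the additive relative invariant `h₁/(f₁·f₂)` admits the partial fraction
decomposition `h₁/(f₁f₂) = α/f₁ + β/f₂` (i.e. `h₁ = α·f₂ + β·f₁`), then `α/f₁` and `β/f₂`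
are themselves additive relative invariants; and if `h₁/(f₁f₂)` is in lowest terms, so are
`α/f₁` and `β/f₂`. -/
theorem additive_relative_invariant_partial_fractions
    (n : ℕ) {G : Type*} [Group G]
    (ρ : G →* ((Fin n → ℂ) ≃ₗ[ℂ] (Fin n → ℂ)))
    (d₁ d₂ : ℕ) (f₁ f₂ α β h₁ : MvPolynomial (Fin n) ℂ)
    (hf₁ : f₁.IsHomogeneous d₁) (hf₁0 : f₁ ≠ 0)
    (hf₂ : f₂.IsHomogeneous d₂) (hf₂0 : f₂ ≠ 0)
    (hα : α.IsHomogeneous d₁) (hβ : β.IsHomogeneous d₂)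
    (hrpf : IsRelPrime f₁ f₂)
    (hsum : h₁ = α * f₂ + β * f₁)
    (χ₁ χ₂ : G →* ℂˣ)
    (hrel₁ : ∀ (g : G) (v : Fin n → ℂ), eval (ρ g v) f₁ = (χ₁ g : ℂ) * eval v f₁)
    (hrel₂ : ∀ (g : G) (v : Fin n → ℂ), eval (ρ g v) f₂ = (χ₂ g : ℂ) * eval v f₂)
    (Φ : G → ℂ)
    (hΦ : ∀ (g : G) (v : Fin n → ℂ),
      eval (ρ g v) h₁ =
        (χ₁ g : ℂ) * (χ₂ g : ℂ) * (eval v f₁ * eval v f₂ * Φ g + eval v h₁)) :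
    (∃ Φ₁ Φ₂ : G → ℂ,
      (∀ g₁ g₂ : G, Φ₁ (g₁ * g₂) = Φ₁ g₁ + Φ₁ g₂) ∧
      (∀ g₁ g₂ : G, Φ₂ (g₁ * g₂) = Φ₂ g₁ + Φ₂ g₂) ∧
      (∀ (g : G) (v : Fin n → ℂ),
        eval (ρ g v) α = (χ₁ g : ℂ) * (eval v f₁ * Φ₁ g + eval v α)) ∧
      (∀ (g : G) (v : Fin n → ℂ),
        eval (ρ g v) β = (χ₂ g : ℂ) * (eval v f₂ * Φ₂ g + eval v β))) ∧
    (IsRelPrime h₁ (f₁ * f₂) → IsRelPrime α f₁ ∧ IsRelPrime β f₂) := by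
  have hsubst (g : G) := exists_linearSubst_eq_of_partialFraction (ρ g).toLinearMap hrpf
    hf₁ hf₁0 hf₂ hf₂0 hα hβ hsum (linearSubst_eq_iff.2 (by simpa using hrel₁ g))
    (linearSubst_eq_iff.2 (by simpa using hrel₂ g))
    (linearSubst_eq_iff.2 fun v => by simp [hΦ]; ring)
  choose Φ₁ Φ₂ hΦ₁ hΦ₂ using hsubst
  have hα' (g : G) (v : Fin n → ℂ) :
      eval (ρ g v) α = χ₁ g * (eval v f₁ * Φ₁ g + eval v α) := by
    simpa [mul_comm] using linearSubst_eq_iff.1 (hΦ₁ g) v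
  have hβ' (g : G) (v : Fin n → ℂ) :
      eval (ρ g v) β = χ₂ g * (eval v f₂ * Φ₂ g + eval v β) := by
    simpa [mul_comm] using linearSubst_eq_iff.1 (hΦ₂ g) v
  have hne : ∀ f : MvPolynomial (Fin n) ℂ, f ≠ 0 → (fun v => eval v f) ≠ 0 :=
    fun f hf h => hf (funext fun v => by simpa using congrFun h v)
  refine ⟨⟨Φ₁, Φ₂, map_mul_eq_add_of_relInvariant ρ χ₁ (a := fun v => eval v α) hrel₁ hα'
    (hne f₁ hf₁0), map_mul_eq_add_of_relInvariant ρ χ₂ (a := fun v => eval v β) hrel₂ hβ'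
    (hne f₂ hf₂0), hα', hβ'⟩, fun h => ?_⟩
  rw [hsum] at h
  exact ⟨h.of_mul_right_left.of_add_mul_right_left.of_mul_left_left,
    h.of_mul_right_right.of_mul_add_right_left.of_mul_left_left⟩
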